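/- Suppose the finite-dimensional right A-module M is δ-stable for some δ ∈ ℤ^n. Then End_A(M) = k, and there exists ε > 0 such that M is δ′-semistable for every δ′ ∈ ℝ^n with δ′(dim M) = 0 and ‖δ′ − δ‖ < ε (semistability for real weights being defined by the same inequalities); that is, the cone of weights for which M is semistable contains a relatively open neighborhood of δ in the hyperplane {δ′ : δ′(dim M) = 0}. -/

import Mathlib

/-!  Common setup: tropical F-polynomials and general presentations
for a finite-dimensional basic algebra `A` over `k`, following Fei,
"Tropical F-polynomials and general presentations".
All modules are *right* `A`-modules, encoded as left `Aᵐᵒᵖ`-modules. -/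

namespace TropGP

open Module MulOpposite

section Defs

variable (k : Type) [Field k]
variable (A : Type) [Ring A] [Algebra k A]

/-- The right regular `A`-module structure on `A` is compatible with the `k`-action. -/
instance instTowerOpA : IsScalarTower k Aᵐᵒᵖ A :=
  ⟨fun c b x => by
    rw [MulOpposite.smul_eq_mul_unop, MulOpposite.smul_eq_mul_unop, MulOpposite.unop_smul,
      Algebra.mul_smul_comm]⟩

/-- Shortcut instance: scalars of `k` commute with the right `A`-action. -/
instance (priority := 5000) instSMulCommOpK (M : Type) [AddCommGroup M] [Module k M]
    [Module Aᵐᵒᵖ M] [IsScalarTower k Aᵐᵒᵖ M] : SMulCommClass Aᵐᵒᵖ k M :=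
  IsScalarTower.to_smulCommClass'

variable {n : ℕ} (e : Fin n → A)

/-- Pairing of a weight vector with an integral (dimension) vector. -/
def pz (δ β : Fin n → ℤ) : ℤ := ∑ i, δ i * β i

/-- Pairing of an integral weight vector with a real vector. -/
def przr (δ : Fin n → ℤ) (γ : Fin n → ℝ) : ℝ := ∑ i, (δ i : ℝ) * γ i

/-- Pairing of two real vectors. -/
def prr (δ γ : Fin n → ℝ) : ℝ := ∑ i, δ i * γ i

variable (M : Type) [AddCommGroup M] [Module k M] [Module Aᵐᵒᵖ M] [IsScalarTower k Aᵐᵒᵖ M]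

/-- Right multiplication by `e i`, as a `k`-linear endomorphism of a right `A`-module. -/
noncomputable def rmul (i : Fin n) : M →ₗ[k] M where
  toFun x := op (e i) • x
  map_add' x y := smul_add _ x y
  map_smul' c x := smul_comm _ c x

/-- The dimension vector: `i ↦ dim_k (M eᵢ)`. -/
noncomputable def dimVec : Fin n → ℤ :=
  fun i => (finrank k (LinearMap.range (rmul k A e M i)) : ℤ)

/-- The real dimension vector. -/
noncomputable def dimVecR : Fin n → ℝ :=
  fun i => (finrank k (LinearMap.range (rmul k A e M i)) : ℝ)

/-- The tropical F-polynomial: `f_M(δ) = max { δ(dim L) : L ⊆ M }`. -/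
noncomputable def tropF (δ : Fin n → ℤ) : ℤ :=
  sSup (Set.range fun L : Submodule Aᵐᵒᵖ M => pz δ (dimVec k A e L))

/-- The dual tropical F-polynomial: `f̌_M(δ) = max { δ(dim N) : M ↠ N }`. -/
noncomputable def tropCheck (δ : Fin n → ℤ) : ℤ :=
  sSup (Set.range fun L : Submodule Aᵐᵒᵖ M => pz δ (dimVec k A e (M ⧸ L)))

/-- The Newton polytope of `M`: the convex hull of dimension vectors of submodules. -/
noncomputable def newton : Set (Fin n → ℝ) :=
  convexHull ℝ {x | ∃ L : Submodule Aᵐᵒᵖ M, x = dimVecR k A e L}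

/-- The dual Newton polytope of `M`: convex hull of dimension vectors of quotients. -/
noncomputable def newtonCheck : Set (Fin n → ℝ) :=
  convexHull ℝ {x | ∃ L : Submodule Aᵐᵒᵖ M, x = dimVecR k A e (M ⧸ L)}

/-- King's `δ`-semistability. -/
def IsSemistable (δ : Fin n → ℤ) : Prop :=
  pz δ (dimVec k A e M) = 0 ∧ ∀ L : Submodule Aᵐᵒᵖ M, pz δ (dimVec k A e L) ≤ 0

/-- `δ`-semistability for a real weight. -/
def IsSemistableR (δ : Fin n → ℝ) : Prop :=
  prr δ (dimVecR k A e M) = 0 ∧ ∀ L : Submodule Aᵐᵒᵖ M, prr δ (dimVecR k A e L) ≤ 0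

/-- `δ`-stability. -/
def IsStable (δ : Fin n → ℤ) : Prop :=
  pz δ (dimVec k A e M) = 0 ∧
    ∀ L : Submodule Aᵐᵒᵖ M, L ≠ ⊥ → L ≠ ⊤ → pz δ (dimVec k A e L) < 0

section HomE

variable {P Q : Type} [AddCommGroup P] [Module Aᵐᵒᵖ P] [AddCommGroup Q] [Module Aᵐᵒᵖ Q]

/-- The `k`-linear map `Hom_A(Q, M) → Hom_A(P, M)` induced by `d : P → Q`. -/
noncomputable def homMap (d : P →ₗ[Aᵐᵒᵖ] Q) : (Q →ₗ[Aᵐᵒᵖ] M) →ₗ[k] (P →ₗ[Aᵐᵒᵖ] M) where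
  toFun f := f ∘ₗ d
  map_add' f g := LinearMap.add_comp _ _ _
  map_smul' c f := LinearMap.smul_comp _ _ _

/-- `dim_k Hom(d, M)`: the kernel of the induced map. -/
noncomputable def homNum (d : P →ₗ[Aᵐᵒᵖ] Q) : ℕ :=
  finrank k (LinearMap.ker (homMap k A M d))

/-- `dim_k E(d, M)`: the cokernel of the induced map. -/
noncomputable def eNum (d : P →ₗ[Aᵐᵒᵖ] Q) : ℕ :=
  finrank k ((P →ₗ[Aᵐᵒᵖ] M) ⧸ LinearMap.range (homMap k A M d))

end HomE

/-- The indecomposable projective right module `e i · A`. -/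
abbrev projP (i : Fin n) : Submodule Aᵐᵒᵖ A := Submodule.span Aᵐᵒᵖ {e i}

/-- The projective right module `P(β) = ⊕ᵢ (eᵢA)^{β i}`. -/
abbrev PP (β : Fin n → ℕ) : Type := Π i : Fin n, Fin (β i) → projP A e i

/-- The weight condition `β₊ - β₋ = δ`. -/
def HasWt (βm βp : Fin n → ℕ) (δ : Fin n → ℤ) : Prop :=
  ∀ i, (βp i : ℤ) - (βm i : ℤ) = δ i

/-- The cokernel of a projective presentation. -/
abbrev Coker {βm βp : Fin n → ℕ} (d : PP A e βm →ₗ[Aᵐᵒᵖ] PP A e βp) : Type :=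
  PP A e βp ⧸ LinearMap.range d

/-- `hom(δ, M)`: min of `dim_k Hom(d,M)` over projective presentations `d` of weight `δ`. -/
noncomputable def homWt (δ : Fin n → ℤ) : ℕ :=
  sInf {m : ℕ | ∃ (βm βp : Fin n → ℕ) (d : PP A e βm →ₗ[Aᵐᵒᵖ] PP A e βp),
    HasWt βm βp δ ∧ m = homNum k A M d}

/-- `e(δ, M)`: min of `dim_k E(d,M)` over projective presentations `d` of weight `δ`. -/
noncomputable def eWt (δ : Fin n → ℤ) : ℕ :=
  sInf {m : ℕ | ∃ (βm βp : Fin n → ℕ) (d : PP A e βm →ₗ[Aᵐᵒᵖ] PP A e βp),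
    HasWt βm βp δ ∧ m = eNum k A M d}

/-- The indecomposable left module `A · e i`. -/
abbrev projL (i : Fin n) : Submodule A A := Submodule.span A {e i}

section DualMod

variable (V : Type) [AddCommGroup V] [Module k V] [Module A V] [IsScalarTower k A V]

/-- Left multiplication by `a` as a `k`-linear endomorphism of a left module. -/
noncomputable def lact (a : A) : V →ₗ[k] V where
  toFun x := a • x
  map_add' x y := smul_add a x y
  map_smul' c x := smul_comm a c x

/-- The right `A`-action on the `k`-dual of a left `A`-module. -/
noncomputable instance dualSMul : SMul Aᵐᵒᵖ (V →ₗ[k] k) :=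
  ⟨fun a f => f ∘ₗ lact k A V a.unop⟩

@[simp] lemma dual_smul_apply (a : Aᵐᵒᵖ) (f : V →ₗ[k] k) (x : V) :
    (a • f) x = f (a.unop • x) := rfl

/-- The `k`-dual of a left `A`-module is a right `A`-module. -/
noncomputable instance dualModule : Module Aᵐᵒᵖ (V →ₗ[k] k) :=
  { dualSMul k A V with
    one_smul := fun f => by ext x; simp
    mul_smul := fun a b f => by ext x; simp [mul_smul]
    smul_zero := fun a => by ext x; simp
    smul_add := fun a f g => by ext x; simp
    add_smul := fun a b f => by ext x; simp [add_smul]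
    zero_smul := fun f => by ext x; simp }

instance dualSMulComm : SMulCommClass Aᵐᵒᵖ k (V →ₗ[k] k) :=
  ⟨fun a c f => by ext x; simp⟩

instance dualTower : IsScalarTower k Aᵐᵒᵖ (V →ₗ[k] k) :=
  ⟨fun c a f => by ext x; simp [MulOpposite.unop_smul, smul_assoc]⟩

end DualMod

/-- The indecomposable injective right module `Iᵢ = D(A eᵢ)`,
the `k`-dual of the left module `A eᵢ`. -/
abbrev IP (i : Fin n) : Type := (projL A e i) →ₗ[k] k

/-- The injective right module `I(β) = ⊕ᵢ Iᵢ^{β i}`. -/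
abbrev IM (β : Fin n → ℕ) : Type := Π i : Fin n, Fin (β i) → IP k A e i

section PostMap

variable {I J : Type} [AddCommGroup I] [Module k I] [Module Aᵐᵒᵖ I] [IsScalarTower k Aᵐᵒᵖ I]
variable [AddCommGroup J] [Module k J] [Module Aᵐᵒᵖ J] [IsScalarTower k Aᵐᵒᵖ J]

/-- The `k`-linear map `Hom_A(M, I) → Hom_A(M, J)` induced by `dc : I → J`. -/
noncomputable def postMap (dc : I →ₗ[Aᵐᵒᵖ] J) :
    (M →ₗ[Aᵐᵒᵖ] I) →ₗ[k] (M →ₗ[Aᵐᵒᵖ] J) where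
  toFun f := dc ∘ₗ f
  map_add' f g := LinearMap.comp_add _ _ _
  map_smul' c f := by
    ext x
    simp only [LinearMap.comp_apply, LinearMap.smul_apply, RingHom.id_apply]
    rw [← algebraMap_smul Aᵐᵒᵖ c (f x), LinearMap.map_smul, algebraMap_smul]

end PostMap

/-- `hom(M, δ̌)`: min of `dim_k Hom(M, ď)` over injective presentations `ď` of weight `δ̌`. -/
noncomputable def ihomWt (δc : Fin n → ℤ) : ℕ :=
  sInf {m : ℕ | ∃ (βp βm : Fin n → ℕ) (dc : IM k A e βp →ₗ[Aᵐᵒᵖ] IM k A e βm),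
    HasWt βm βp δc ∧ m = finrank k (LinearMap.ker (postMap k A M dc))}

/-- `ě(M, δ̌)`: min of `dim_k Ě(M, ď)` over injective presentations `ď` of weight `δ̌`. -/
noncomputable def ieWt (δc : Fin n → ℤ) : ℕ :=
  sInf {m : ℕ | ∃ (βp βm : Fin n → ℕ) (dc : IM k A e βp →ₗ[Aᵐᵒᵖ] IM k A e βm),
    HasWt βm βp δc ∧
      m = Module.finrank k
        (@HasQuotient.Quotient (M →ₗ[Aᵐᵒᵖ] IM k A e βm) _ Submodule.hasQuotient
          (LinearMap.range (postMap k A M dc)))}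

/-- `e(δ, δ) = 0`: there are projective presentations `d, d'` of weight `δ` with
`E(d, Coker d') = 0`, i.e. the induced map on `Hom`s is surjective. -/
def EWtSelfZero (δ : Fin n → ℤ) : Prop :=
  ∃ (βm βp : Fin n → ℕ) (d : PP A e βm →ₗ[Aᵐᵒᵖ] PP A e βp)
    (βm' βp' : Fin n → ℕ) (d' : PP A e βm' →ₗ[Aᵐᵒᵖ] PP A e βp'),
    HasWt βm βp δ ∧ HasWt βm' βp' δ ∧
      Function.Surjective (homMap k A (Coker A e d') d)

/-- `e₁, …, e_n` is a complete set of primitive orthogonal idempotents and `A` is basic: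
the indecomposable projectives `eᵢA` are pairwise non-isomorphic. -/
def IsBasicSetup : Prop :=
  (∀ i, IsIdempotentElem (e i)) ∧
  (∀ i j, i ≠ j → e i * e j = 0) ∧
  (∑ i, e i = 1) ∧
  (∀ i, e i ≠ 0 ∧ ∀ f g : A, IsIdempotentElem f → IsIdempotentElem g →
      f * g = 0 → g * f = 0 → f + g = e i → f = 0 ∨ g = 0) ∧
  (∀ i j, i ≠ j → IsEmpty (projP A e i ≃ₗ[Aᵐᵒᵖ] projP A e j))

end Defs

end TropGP

open TropGP Module MulOpposite

/- Schur's lemma is King's argument: for an endomorphism `ψ`, `dim ker ψ + dim im ψ = dim M`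
coordinatewise (on `M eᵢ` because `eᵢ` is idempotent), so stability leaves no room for a kernel
other than `0` and `M`; for an eigenvalue `c` of `φ`, `φ - c` has a nonzero kernel and vanishes.
Openness comes from integrality: `δ(dim L) ≤ -1` for every proper nonzero submodule `L`, while
each coordinate of `dim L` is at most `dim_k M`, so moving `δ` by less than `1/(n·dim_k M + 1)`
in the sup norm moves every `δ(dim L)` by less than `1`. -/

theorem Submodule.finrank_map_add_finrank_inf_ker {K V W : Type*} [Field K] [AddCommGroup V]
    [Module K V] [AddCommGroup W] [Module K W] [FiniteDimensional K V]
    (f : V →ₗ[K] W) (S : Submodule K V) :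
    finrank K (S.map f) + finrank K ↥(S ⊓ LinearMap.ker f) = finrank K S := by
  rw [← LinearMap.range_domRestrict, ← Submodule.map_comap_subtype,
    Submodule.finrank_map_subtype_eq, ← LinearMap.ker_domRestrict]
  exact (f.domRestrict S).finrank_range_add_finrank_ker

namespace TropGP

section Pairing

variable {n : ℕ}

theorem pz_add_right (δ β γ : Fin n → ℤ) : pz δ (β + γ) = pz δ β + pz δ γ := by
  simp only [pz, Pi.add_apply, mul_add, Finset.sum_add_distrib]

theorem prr_intCast_eq_pz_add_prr_sub (δ : Fin n → ℤ) (δ' : Fin n → ℝ) (β : Fin n → ℤ) :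
    prr δ' (fun i => (β i : ℝ)) =
      pz δ β + prr (δ' - fun i => (δ i : ℝ)) (fun i => (β i : ℝ)) := by
  simp only [prr, pz, Int.cast_sum, Int.cast_mul, Pi.sub_apply, sub_mul,
    Finset.sum_sub_distrib, add_sub_cancel]

theorem prr_le_card_mul_norm_mul (w v : Fin n → ℝ) {D : ℝ} (hv : ∀ i, |v i| ≤ D) :
    prr w v ≤ n * (‖w‖ * D) := by
  calc prr w v ≤ ∑ _i : Fin n, ‖w‖ * D := Finset.sum_le_sum fun i _ => by
        calc w i * v i ≤ |w i| * |v i| := (le_abs_self _).trans (abs_mul _ _).le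
          _ ≤ ‖w‖ * D := mul_le_mul (by simpa using norm_le_pi_norm w i) (hv i)
              (abs_nonneg _) (norm_nonneg _)
    _ = n * (‖w‖ * D) := by simp

end Pairing

section Modules

variable {k : Type} [Field k] {A : Type} [Ring A] [Algebra k A] {n : ℕ} {e : Fin n → A}
variable {M : Type} [AddCommGroup M] [Module k M] [Module Aᵐᵒᵖ M] [IsScalarTower k Aᵐᵒᵖ M]
variable {N : Type} [AddCommGroup N] [Module k N] [Module Aᵐᵒᵖ N] [IsScalarTower k Aᵐᵒᵖ N]

variable (k A e) in
/-- `L eᵢ`, as a subspace of the ambient module rather than of `L`. -/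
noncomputable def eSpace (L : Submodule Aᵐᵒᵖ M) (i : Fin n) : Submodule k M :=
  (L.restrictScalars k).map (rmul k A e M i)

theorem dimVec_eq_finrank_eSpace (L : Submodule Aᵐᵒᵖ M) (i : Fin n) :
    dimVec k A e L i = finrank k (eSpace k A e L i) := by
  have hmap : (LinearMap.range (rmul k A e L i)).map (L.subtype.restrictScalars k) =
      eSpace k A e L i := by
    ext x
    simp only [eSpace, Submodule.mem_map, LinearMap.mem_range, Submodule.restrictScalars_mem]
    constructor
    · rintro ⟨_, ⟨y, rfl⟩, rfl⟩
      exact ⟨y, y.2, rfl⟩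
    · rintro ⟨y, hy, rfl⟩
      exact ⟨_, ⟨⟨y, hy⟩, rfl⟩, rfl⟩
  rw [dimVec, ← hmap, ← (Submodule.equivMapOfInjective (L.subtype.restrictScalars k)
    L.injective_subtype _).finrank_eq]

theorem eSpace_top (i : Fin n) :
    eSpace k A e (⊤ : Submodule Aᵐᵒᵖ M) i = LinearMap.range (rmul k A e M i) := by
  rw [eSpace, Submodule.restrictScalars_top, Submodule.map_top]

theorem dimVec_top : dimVec k A e (⊤ : Submodule Aᵐᵒᵖ M) = dimVec k A e M := by
  funext i
  rw [dimVec_eq_finrank_eSpace, eSpace_top]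
  rfl

theorem dimVec_bot : dimVec k A e (⊥ : Submodule Aᵐᵒᵖ M) = 0 := by
  funext i
  rw [dimVec_eq_finrank_eSpace, eSpace, Submodule.restrictScalars_bot, Submodule.map_bot,
    finrank_bot]
  rfl

theorem eSpace_map (ψ : M →ₗ[Aᵐᵒᵖ] N) (L : Submodule Aᵐᵒᵖ M) (i : Fin n) :
    eSpace k A e (L.map ψ) i = (eSpace k A e L i).map (ψ.restrictScalars k) := by
  ext x
  simp [eSpace, rmul]

theorem eSpace_eq_top_inf {i : Fin n} (hi : IsIdempotentElem (e i)) (L : Submodule Aᵐᵒᵖ M) :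
    eSpace k A e L i = eSpace k A e ⊤ i ⊓ L.restrictScalars k := by
  ext x
  simp only [eSpace, Submodule.mem_map, Submodule.mem_inf, Submodule.restrictScalars_mem,
    Submodule.restrictScalars_top, Submodule.mem_top, true_and]
  constructor
  · rintro ⟨y, hy, rfl⟩
    exact ⟨⟨y, rfl⟩, L.smul_mem _ hy⟩
  · rintro ⟨⟨y, rfl⟩, hx⟩
    refine ⟨_, hx, ?_⟩
    simp only [rmul, LinearMap.coe_mk, AddHom.coe_mk, smul_smul, ← op_mul, hi.eq]

theorem dimVec_ker_add_dimVec_range [FiniteDimensional k M] (he : ∀ i, IsIdempotentElem (e i))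
    (ψ : M →ₗ[Aᵐᵒᵖ] N) :
    dimVec k A e (LinearMap.ker ψ) + dimVec k A e (LinearMap.range ψ) = dimVec k A e M := by
  funext i
  have h := Submodule.finrank_map_add_finrank_inf_ker (ψ.restrictScalars k) (eSpace k A e ⊤ i)
  rw [← eSpace_map, ← LinearMap.range_eq_map, LinearMap.ker_restrictScalars k,
    ← eSpace_eq_top_inf (he i)] at h
  rw [Pi.add_apply, dimVec_eq_finrank_eSpace, dimVec_eq_finrank_eSpace, ← dimVec_top,
    dimVec_eq_finrank_eSpace]
  omega

theorem dimVecR_eq_intCast : dimVecR k A e M = fun i => (dimVec k A e M i : ℝ) := by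
  funext i
  simp [dimVecR, dimVec]

variable {δ : Fin n → ℤ}

theorem IsStable.isSemistable (hM : IsStable k A e M δ) : IsSemistable k A e M δ := by
  refine ⟨hM.1, fun L => ?_⟩
  rcases eq_or_ne L ⊥ with rfl | hbot
  · simp [dimVec_bot, pz]
  rcases eq_or_ne L ⊤ with rfl | htop
  · rw [dimVec_top, hM.1]
  · exact (hM.2 L hbot htop).le

theorem IsStable.ker_eq_bot_of_ne_zero [FiniteDimensional k M] (he : ∀ i, IsIdempotentElem (e i))
    (hM : IsStable k A e M δ) (hN : IsSemistable k A e N δ) {ψ : M →ₗ[Aᵐᵒᵖ] N} (hψ : ψ ≠ 0) :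
    LinearMap.ker ψ = ⊥ := by
  by_contra hker
  have hker_lt := hM.2 _ hker fun h => hψ (LinearMap.ker_eq_top.mp h)
  have hrange_le := hN.2 (LinearMap.range ψ)
  have hsum := congrArg (pz δ) (dimVec_ker_add_dimVec_range (k := k) he ψ)
  rw [pz_add_right, hM.1] at hsum
  omega

theorem IsStable.exists_eq_smul_id [IsAlgClosed k] [FiniteDimensional k M]
    (he : ∀ i, IsIdempotentElem (e i)) (hM : IsStable k A e M δ) (φ : M →ₗ[Aᵐᵒᵖ] M) :
    ∃ c : k, φ = c • LinearMap.id := by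
  cases subsingleton_or_nontrivial M
  · exact ⟨0, Subsingleton.elim _ _⟩
  obtain ⟨c, hc⟩ := Module.End.exists_eigenvalue (φ.restrictScalars k)
  obtain ⟨v, hv⟩ := hc.exists_hasEigenvector
  refine ⟨c, sub_eq_zero.mp ?_⟩
  by_contra hne
  have hv_ker : v ∈ LinearMap.ker (φ - c • LinearMap.id) := by
    have hφv : φ v = c • v := hv.apply_eq_smul
    simp [hφv]
  rw [hM.ker_eq_bot_of_ne_zero he hM.isSemistable hne, Submodule.mem_bot] at hv_ker
  exact hv.2 hv_ker

theorem IsStable.isSemistableR_of_norm_sub_lt [FiniteDimensional k M]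
    (hM : IsStable k A e M δ) {δ' : Fin n → ℝ} (hδ'M : prr δ' (dimVecR k A e M) = 0)
    (hδ' : ‖δ' - fun i => (δ i : ℝ)‖ < 1 / (n * finrank k M + 1)) :
    IsSemistableR k A e M δ' := by
  refine ⟨hδ'M, fun L => ?_⟩
  rw [dimVecR_eq_intCast]
  rcases eq_or_ne L ⊥ with rfl | hbot
  · simp [dimVec_bot, prr]
  rcases eq_or_ne L ⊤ with rfl | htop
  · rw [dimVec_top, ← dimVecR_eq_intCast, hδ'M]
  have hL : (pz δ (dimVec k A e L) : ℝ) ≤ -1 := by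
    exact_mod_cast Int.le_sub_one_of_lt (hM.2 L hbot htop)
  have hdim : ∀ i, |(dimVec k A e L i : ℝ)| ≤ finrank k M := fun i => by
    rw [dimVec_eq_finrank_eSpace]
    simpa using Submodule.finrank_le (eSpace k A e L i)
  have hpert := prr_le_card_mul_norm_mul (δ' - fun i => (δ i : ℝ)) _ hdim
  have hsmall : (n : ℝ) * (‖δ' - fun i => (δ i : ℝ)‖ * finrank k M) < 1 := by
    rw [lt_div_iff₀ (by positivity)] at hδ'
    nlinarith [norm_nonneg (δ' - fun i => (δ i : ℝ))]
  rw [prr_intCast_eq_pz_add_prr_sub δ]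
  linarith

end Modules

end TropGP

theorem statement19_general (k : Type) [Field k] [IsAlgClosed k]
    (A : Type) [Ring A] [Algebra k A]
    {n : ℕ} (e : Fin n → A) (hA : IsBasicSetup A e)
    (M : Type) [AddCommGroup M] [Module k M] [Module Aᵐᵒᵖ M]
    [IsScalarTower k Aᵐᵒᵖ M] [FiniteDimensional k M]
    (δ : Fin n → ℤ) (hstab : IsStable k A e M δ) :
    (∀ φ : M →ₗ[Aᵐᵒᵖ] M, ∃ c : k, φ = c • LinearMap.id) ∧
    (∃ ε : ℝ, 0 < ε ∧ ∀ δ' : Fin n → ℝ,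
      prr δ' (dimVecR k A e M) = 0 → ‖δ' - (fun i => (δ i : ℝ))‖ < ε →
      IsSemistableR k A e M δ') := by
  have he : ∀ i, IsIdempotentElem (e i) := hA.1
  exact ⟨hstab.exists_eq_smul_id he, 1 / (n * finrank k M + 1), by positivity,
    fun _ hδ'M hδ' => hstab.isSemistableR_of_norm_sub_lt hδ'M hδ'⟩

/-- If `M` is `δ`-stable for some `δ ∈ ℤⁿ`, then `End_A(M) = k` and
there is `ε > 0` such that `M` is `δ'`-semistable for every real weight `δ'` with
`δ'(dim M) = 0` and `‖δ' − δ‖ < ε`. -/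
theorem statement19 (k : Type) [Field k] [IsAlgClosed k] [CharZero k]
    (A : Type) [Ring A] [Algebra k A] [FiniteDimensional k A]
    {n : ℕ} (e : Fin n → A) (hA : IsBasicSetup A e)
    (M : Type) [AddCommGroup M] [Module k M] [Module Aᵐᵒᵖ M]
    [IsScalarTower k Aᵐᵒᵖ M] [FiniteDimensional k M]
    (δ : Fin n → ℤ) (hstab : IsStable k A e M δ) :
    (∀ φ : M →ₗ[Aᵐᵒᵖ] M, ∃ c : k, φ = c • LinearMap.id) ∧
    (∃ ε : ℝ, 0 < ε ∧ ∀ δ' : Fin n → ℝ,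
      prr δ' (dimVecR k A e M) = 0 → ‖δ' - (fun i => (δ i : ℝ))‖ < ε →
      IsSemistableR k A e M δ') :=
  statement19_general k A e hA M δ hstab
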